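/- arXiv:1906.03149 — 2 statements merged into one kernel-verified Lean document; each statement's English description precedes it below -/
import Mathlib

section
/- Let F be a spreading linear triple system on a finite set V with |V| > 5. If v, u₁, u₂, u₃ ∈ V are four distinct vertices such that none of the pairs {v,u₁}, {v,u₂}, {v,u₃} is covered, then {u₁,u₂,u₃} is not a triple of F. -/
open Finset

variable {α : Type*}

/-- A pair of (distinct) vertices is covered if it lies in some triple of `F`. -/
def Covered [DecidableEq α] (F : Finset (Finset α)) (x y : α) : Prop :=
  ∃ T ∈ F, x ∈ T ∧ y ∈ T

instance [DecidableEq α] (F : Finset (Finset α)) (x y : α) : Decidable (Covered F x y) :=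
  inferInstanceAs (Decidable (∃ T ∈ F, x ∈ T ∧ y ∈ T))

/-- Linear triple system on `V`. -/
def IsLinearTS [DecidableEq α] (V : Finset α) (F : Finset (Finset α)) : Prop :=
  (∀ T ∈ F, T ⊆ V ∧ T.card = 3) ∧
    ∀ x ∈ V, ∀ y ∈ V, x ≠ y → (F.filter fun T => x ∈ T ∧ y ∈ T).card ≤ 1

/-- Steiner triple system on `V`. -/
def IsSTS [DecidableEq α] (V : Finset α) (F : Finset (Finset α)) : Prop :=
  (∀ T ∈ F, T ⊆ V ∧ T.card = 3) ∧
    ∀ x ∈ V, ∀ y ∈ V, x ≠ y → (F.filter fun T => x ∈ T ∧ y ∈ T).card = 1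

/-- Neighbourhood of `V'` with respect to the triple system `F` on `V`. -/
def nbhd [DecidableEq α] (V : Finset α) (F : Finset (Finset α)) (V' : Finset α) : Finset α :=
  (V \ V').filter fun z => ∃ x ∈ V', ∃ y ∈ V', x ≠ y ∧ ({x, y, z} : Finset α) ∈ F

/-- `F` is spreading: the closure of every nontrivial subset is `V`. -/
def IsSpreading [DecidableEq α] (V : Finset α) (F : Finset (Finset α)) : Prop :=
  ∀ V' ⊆ V, 3 ≤ V'.card → V' ∉ F →
    ∀ W, V' ⊆ W → W ⊆ V → nbhd V F W = ∅ → W = V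

/-- `F` is weakly spreading. -/
def IsWeaklySpreading [DecidableEq α] (V : Finset α) (F : Finset (Finset α)) : Prop :=
  ∀ F' ⊆ F, 2 ≤ F'.card →
    ∀ W, F'.biUnion id ⊆ W → W ⊆ V → nbhd V F W = ∅ → W = V

/-- `Val(T)`: number of private neighbours of the triple `T`. -/
def valT [DecidableEq α] (V : Finset α) (F : Finset (Finset α)) (T : Finset α) : ℕ :=
  ((V \ T).filter fun v => (T.filter fun t => Covered F v t).card = 1).card

/-- Two triples are adjacent if pairs of each span a `C₄` in the complement of the skeleton. -/
def AdjT [DecidableEq α] (F : Finset (Finset α)) (T T' : Finset α) : Prop :=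
  ∃ v₁ ∈ T, ∃ v₂ ∈ T, ∃ u₁ ∈ T', ∃ u₂ ∈ T',
    v₁ ≠ v₂ ∧ u₁ ≠ u₂ ∧ v₁ ≠ u₁ ∧ v₁ ≠ u₂ ∧ v₂ ≠ u₁ ∧ v₂ ≠ u₂ ∧
    ¬Covered F v₁ u₁ ∧ ¬Covered F u₁ v₂ ∧ ¬Covered F v₂ u₂ ∧ ¬Covered F u₂ v₁

instance [DecidableEq α] (F : Finset (Finset α)) (T T' : Finset α) : Decidable (AdjT F T T') :=
  inferInstanceAs (Decidable (∃ v₁ ∈ T, ∃ v₂ ∈ T, ∃ u₁ ∈ T', ∃ u₂ ∈ T',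
    v₁ ≠ v₂ ∧ u₁ ≠ u₂ ∧ v₁ ≠ u₁ ∧ v₁ ≠ u₂ ∧ v₂ ≠ u₁ ∧ v₂ ≠ u₂ ∧
    ¬Covered F v₁ u₁ ∧ ¬Covered F u₁ v₂ ∧ ¬Covered F v₂ u₂ ∧ ¬Covered F u₂ v₁))

/-!
The four vertices `v, u₁, u₂, u₃` already form a closed set: a triple through `v` meets no
`uᵢ`, and by linearity the only triple through two of the `uᵢ` is `{u₁, u₂, u₃}` itself.
This closed set is not a triple (it would cover `{v, u₁}`), so spreading forces it to be all
of `V`, which has more than five vertices.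
-/

section LinearTripleSystem

variable [DecidableEq α] {V : Finset α} {F : Finset (Finset α)}

theorem IsLinearTS.eq_of_mem_of_mem (hL : IsLinearTS V F) {T T' : Finset α} (hT : T ∈ F)
    (hT' : T' ∈ F) {x y : α} (hxy : x ≠ y) (hx : x ∈ T) (hy : y ∈ T) (hx' : x ∈ T')
    (hy' : y ∈ T') : T = T' := by
  have hV := (hL.1 T hT).1
  exact card_le_one.mp (hL.2 x (hV hx) y (hV hy) hxy) T (mem_filter.mpr ⟨hT, hx, hy⟩)
    T' (mem_filter.mpr ⟨hT', hx', hy'⟩)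

theorem IsLinearTS.nbhd_eq_empty_of_mem (hL : IsLinearTS V F) {T : Finset α} (hT : T ∈ F) :
    nbhd V F T = ∅ := by
  refine eq_empty_iff_forall_notMem.mpr fun z hz => ?_
  obtain ⟨hzT, x, hx, y, hy, hxy, hxyz⟩ := (mem_filter.mp hz).imp_left (mem_sdiff.mp · |>.2)
  have hT_eq : {x, y, z} = T := hL.eq_of_mem_of_mem hxyz hT hxy (by simp) (by simp) hx hy
  exact hzT (hT_eq ▸ by simp)

end LinearTripleSystem

theorem nbhd_insert_eq_empty [DecidableEq α] {V W : Finset α} {F : Finset (Finset α)} {v : α}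
    (hW : nbhd V F W = ∅) (hv : ∀ w ∈ W, ¬Covered F v w) : nbhd V F (insert v W) = ∅ := by
  refine eq_empty_iff_forall_notMem.mpr fun z hz => ?_
  simp only [nbhd, mem_filter, mem_sdiff, mem_insert, not_or] at hz
  obtain ⟨⟨hzV, hzv, hzW⟩, x, hx, y, hy, hxy, hxyz⟩ := hz
  rcases hx with rfl | hxW
  · exact hv y (hy.resolve_left hxy.symm) ⟨_, hxyz, by simp, by simp⟩
  rcases hy with rfl | hyW
  · exact hv x hxW ⟨_, hxyz, by simp, by simp⟩
  have hzN : z ∈ nbhd V F W := mem_filter.mpr ⟨mem_sdiff.mpr ⟨hzV, hzW⟩, x, hxW, y, hyW, hxy, hxyz⟩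
  simp [hW] at hzN

theorem statement_8_general {α : Type*} [DecidableEq α] (V : Finset α) (F : Finset (Finset α))
    (hL : IsLinearTS V F) (hS : IsSpreading V F) (hV : 5 < V.card)
    (v u₁ u₂ u₃ : α) (hv : v ∈ V)
    (hc1 : ¬Covered F v u₁) (hc2 : ¬Covered F v u₂) (hc3 : ¬Covered F v u₃) :
    ({u₁, u₂, u₃} : Finset α) ∉ F := by
  intro hT
  obtain ⟨hTV, hT3⟩ := hL.1 _ hT
  have hclosed : nbhd V F {v, u₁, u₂, u₃} = ∅ := by
    refine nbhd_insert_eq_empty (hL.nbhd_eq_empty_of_mem hT) ?_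
    simp only [mem_insert, mem_singleton]
    rintro w (rfl | rfl | rfl) <;> assumption
  have hSV : ({v, u₁, u₂, u₃} : Finset α) ⊆ V := insert_subset hv hTV
  have hSF : ({v, u₁, u₂, u₃} : Finset α) ∉ F := fun h => hc1 ⟨_, h, by simp, by simp⟩
  have hS3 : 3 ≤ ({v, u₁, u₂, u₃} : Finset α).card := hT3 ▸ card_le_card (subset_insert _ _)
  have hS_eq := hS _ hSV hS3 hSF _ subset_rfl hSV hclosed
  have hS4 := card_insert_le v ({u₁, u₂, u₃} : Finset α)
  rw [hS_eq] at hS4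
  omega

/-- In a spreading linear triple system on more than 5 vertices, if none
of the pairs `{v,u₁}, {v,u₂}, {v,u₃}` is covered (the four vertices being distinct),
then `{u₁,u₂,u₃}` is not a triple of the system. -/
theorem statement_8 {α : Type*} [DecidableEq α] (V : Finset α) (F : Finset (Finset α))
    (hL : IsLinearTS V F) (hS : IsSpreading V F) (hV : 5 < V.card)
    (v u₁ u₂ u₃ : α) (hv : v ∈ V) (h1 : u₁ ∈ V) (h2 : u₂ ∈ V) (h3 : u₃ ∈ V)
    (hvu₁ : v ≠ u₁) (hvu₂ : v ≠ u₂) (hvu₃ : v ≠ u₃)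
    (h12 : u₁ ≠ u₂) (h13 : u₁ ≠ u₃) (h23 : u₂ ≠ u₃)
    (hc1 : ¬Covered F v u₁) (hc2 : ¬Covered F v u₂) (hc3 : ¬Covered F v u₃) :
    ({u₁, u₂, u₃} : Finset α) ∉ F :=
  statement_8_general V F hL hS hV v u₁ u₂ u₃ hv hc1 hc2 hc3
end

section
/- Let F be a spreading linear triple system on a finite set V with |V| > 5, and let T = {v₁,v₂,v₃} ∈ F. For i = 1,2,3 let N*_i be the set of vertices v ∈ V \ T such that among the pairs {v,v₁}, {v,v₂}, {v,v₃} exactly the pair {v,v_i} is covered. Then any two distinct vertices u, u' ∈ N*₁ ∪ N*₂ ∪ N*₃ form a covered pair {u,u'}; that is, N*₁ ∪ N*₂ ∪ N*₃ induces a complete graph in the skeleton of F. -/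
open Finset

variable {α : Type*}

section

variable {V : Finset α} {F : Finset (Finset α)} [DecidableEq α]

theorem Covered.symm {x y : α} (h : Covered F x y) : Covered F y x :=
  let ⟨T, hT, hx, hy⟩ := h; ⟨T, hT, hy, hx⟩

theorem nbhd_eq_empty_of_pairwise_not_covered {W : Finset α}
    (hW : (W : Set α).Pairwise fun x y => ¬Covered F x y) : nbhd V F W = ∅ := by
  refine eq_empty_of_forall_notMem fun z hz => ?_
  obtain ⟨-, x, hx, y, hy, hxy, hxyz⟩ := mem_filter.1 hz
  exact hW hx hy hxy ⟨_, hxyz, by simp, by simp⟩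

/-- In a spreading system on more than three vertices, the skeleton has no independent set of
size three: such a set is closed (it spans no triple) and is not itself a triple. -/
theorem IsSpreading.covered_of_not_covered (hS : IsSpreading V F) (hV : 3 < V.card)
    {u u' w : α} (hu : u ∈ V) (hu' : u' ∈ V) (hw : w ∈ V)
    (huu' : u ≠ u') (huw : u ≠ w) (hu'w : u' ≠ w)
    (huw' : ¬Covered F u w) (hu'w' : ¬Covered F u' w) : Covered F u u' := by
  by_contra huu''
  set W : Finset α := {u, u', w}
  have hWV : W ⊆ V := by simp [W, insert_subset_iff, hu, hu', hw]
  have hW : W.card = 3 := card_eq_three.2 ⟨u, u', w, huu', huw, hu'w, rfl⟩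
  have hWF : W ∉ F := fun hWF => huu'' ⟨W, hWF, by simp [W], by simp [W]⟩
  have hpair : (W : Set α).Pairwise fun x y => ¬Covered F x y := by
    intro x hx y hy hxy hcov
    simp only [W, coe_insert, coe_singleton, Set.mem_insert_iff, Set.mem_singleton_iff] at hx hy
    rcases hx with rfl | rfl | rfl <;> rcases hy with rfl | rfl | rfl <;>
      simp_all [hcov.symm]
  have hWV' : W = V :=
    hS W hWV hW.ge hWF W subset_rfl hWV (nbhd_eq_empty_of_pairwise_not_covered hpair)
  rw [← hWV', hW] at hV
  exact lt_irrefl _ hV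

end

theorem statement_9_general {α : Type*} [DecidableEq α] (V : Finset α) (F : Finset (Finset α))
    (hL : IsLinearTS V F) (hS : IsSpreading V F) (hV : 5 < V.card)
    (v₁ v₂ v₃ : α)
    (hT : ({v₁, v₂, v₃} : Finset α) ∈ F)
    (N₁ N₂ N₃ : Finset α)
    (hN₁ : N₁ = (V \ ({v₁, v₂, v₃} : Finset α)).filter
      fun v => Covered F v v₁ ∧ ¬Covered F v v₂ ∧ ¬Covered F v v₃)
    (hN₂ : N₂ = (V \ ({v₁, v₂, v₃} : Finset α)).filter
      fun v => ¬Covered F v v₁ ∧ Covered F v v₂ ∧ ¬Covered F v v₃)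
    (hN₃ : N₃ = (V \ ({v₁, v₂, v₃} : Finset α)).filter
      fun v => ¬Covered F v v₁ ∧ ¬Covered F v v₂ ∧ Covered F v v₃) :
    ∀ u ∈ N₁ ∪ N₂ ∪ N₃, ∀ u' ∈ N₁ ∪ N₂ ∪ N₃, u ≠ u' → Covered F u u' := by
  have hsub : N₁ ∪ N₂ ∪ N₃ ⊆ V \ {v₁, v₂, v₃} := by
    subst hN₁ hN₂ hN₃
    exact union_subset (union_subset (filter_subset _ _) (filter_subset _ _)) (filter_subset _ _)
  intro u hu u' hu' huu'
  obtain ⟨huV, huT⟩ := mem_sdiff.1 (hsub hu)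
  obtain ⟨hu'V, hu'T⟩ := mem_sdiff.1 (hsub hu')
  -- `u` and `u'` each see at most one vertex of the triple, so some `vᵢ` sees neither.
  have common (w : α) (hw : w ∈ ({v₁, v₂, v₃} : Finset α)) :
      ¬Covered F u w → ¬Covered F u' w → Covered F u u' :=
    hS.covered_of_not_covered (by omega) huV hu'V ((hL.1 _ hT).1 hw) huu'
      (ne_of_mem_of_not_mem hw huT).symm (ne_of_mem_of_not_mem hw hu'T).symm
  subst hN₁ hN₂ hN₃
  simp only [mem_union, mem_filter] at hu hu'
  rcases hu with (⟨-, h⟩ | ⟨-, h⟩) | ⟨-, h⟩ <;>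
    rcases hu' with (⟨-, h'⟩ | ⟨-, h'⟩) | ⟨-, h'⟩ <;>
    first
      | exact common v₁ (by simp) h.1 h'.1
      | exact common v₂ (by simp) h.2.1 h'.2.1
      | exact common v₃ (by simp) h.2.2 h'.2.2

/-- For a triple `T = {v₁,v₂,v₃}` of a spreading linear triple system on
more than 5 vertices, the private-neighbour sets `N*₁ ∪ N*₂ ∪ N*₃` induce a complete
graph in the skeleton. -/
theorem statement_9 {α : Type*} [DecidableEq α] (V : Finset α) (F : Finset (Finset α))
    (hL : IsLinearTS V F) (hS : IsSpreading V F) (hV : 5 < V.card)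
    (v₁ v₂ v₃ : α) (h12 : v₁ ≠ v₂) (h13 : v₁ ≠ v₃) (h23 : v₂ ≠ v₃)
    (hT : ({v₁, v₂, v₃} : Finset α) ∈ F)
    (N₁ N₂ N₃ : Finset α)
    (hN₁ : N₁ = (V \ ({v₁, v₂, v₃} : Finset α)).filter
      fun v => Covered F v v₁ ∧ ¬Covered F v v₂ ∧ ¬Covered F v v₃)
    (hN₂ : N₂ = (V \ ({v₁, v₂, v₃} : Finset α)).filter
      fun v => ¬Covered F v v₁ ∧ Covered F v v₂ ∧ ¬Covered F v v₃)
    (hN₃ : N₃ = (V \ ({v₁, v₂, v₃} : Finset α)).filter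
      fun v => ¬Covered F v v₁ ∧ ¬Covered F v v₂ ∧ Covered F v v₃) :
    ∀ u ∈ N₁ ∪ N₂ ∪ N₃, ∀ u' ∈ N₁ ∪ N₂ ∪ N₃, u ≠ u' → Covered F u u' :=
  statement_9_general V F hL hS hV v₁ v₂ v₃ hT N₁ N₂ N₃ hN₁ hN₂ hN₃
end
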